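/- Let S, T, U, C be finsets of ι with C ⊆ U, and let b ∈ ι with b ∉ U and b ∉ S ∪ T. Then (m_S * F_U) * (m_T * F_{C ∪ {b}}) = m_{S ∪ T ∪ {b}} * F_U + m_{S ∪ T ∪ {b}} * F_C + m_{S ∪ T} * F_C in R (the semantic identity underlying multiplication rule 22 of the Multiplication Rewriting Principle, where V = (U ∩ V) ∪ {b} with U ∩ V = C). -/

import Mathlib

/-!
Every `ZMod 2`-valued function is idempotent, so a product of such functions over `s ∪ t` is the
product over `s` times the product over `t`, overlap or not. As `1 + F U = ∏ i ∈ U, (1 + a i)`,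
both `m` and `1 + F` turn unions into products; `C ⊆ U` then gives
`(1 + F U) * (1 + F C) = 1 + F U`, and together with `1 + F (C ∪ {b}) = (1 + F C) * (1 + a b)`
this yields the identity by linear arithmetic in characteristic two.
-/

variable {ι : Type*} [DecidableEq ι]

/-- Monomial semantics: `m S` evaluates an assignment `a` to `∏ i ∈ S, a i`. -/
def m (S : Finset ι) : (ι → ZMod 2) → ZMod 2 :=
  fun a => ∏ i ∈ S, a i

/-- Power-set sum semantics: `F U` evaluates `a` to the sum over nonempty subsets `A ⊆ U`
of `∏ i ∈ A, a i`. -/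
def F (U : Finset ι) : (ι → ZMod 2) → ZMod 2 :=
  fun a => ∑ A ∈ U.powerset.erase ∅, ∏ i ∈ A, a i

theorem Finset.isIdempotentElem_prod {κ M : Type*} [CommMonoid M] {s : Finset κ} {f : κ → M}
    (hf : ∀ i ∈ s, IsIdempotentElem (f i)) : IsIdempotentElem (∏ i ∈ s, f i) :=
  Finset.prod_induction f IsIdempotentElem (fun _ _ => IsIdempotentElem.mul)
    IsIdempotentElem.one hf

theorem Finset.prod_union_of_isIdempotentElem {κ M : Type*} [DecidableEq κ] [CommMonoid M]
    {s t : Finset κ} {f : κ → M} (hf : ∀ i ∈ s ∩ t, IsIdempotentElem (f i)) :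
    ∏ i ∈ s ∪ t, f i = (∏ i ∈ s, f i) * ∏ i ∈ t, f i := by
  have hst : s ∩ t ⊆ s ∪ t := Finset.inter_subset_left.trans Finset.subset_union_left
  rw [← Finset.prod_union_inter, ← Finset.prod_sdiff hst, mul_assoc,
    (Finset.isIdempotentElem_prod hf).eq]

theorem isIdempotentElem_of_zmod_two_valued {α : Type*} (f : α → ZMod 2) : IsIdempotentElem f :=
  funext fun a => (by decide : ∀ z : ZMod 2, z * z = z) (f a)

theorem prod_union_of_zmod_two_valued {κ α : Type*} [DecidableEq κ] (s t : Finset κ)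
    (f : κ → α → ZMod 2) : ∏ i ∈ s ∪ t, f i = (∏ i ∈ s, f i) * ∏ i ∈ t, f i :=
  Finset.prod_union_of_isIdempotentElem fun i _ => isIdempotentElem_of_zmod_two_valued (f i)

omit [DecidableEq ι] in
theorem m_eq_prod_eval (S : Finset ι) : m S = ∏ i ∈ S, Function.eval i := by
  funext a
  simp [m, Finset.prod_apply]

theorem m_union (S T : Finset ι) : m (S ∪ T) = m S * m T := by
  simp only [m_eq_prod_eval, prod_union_of_zmod_two_valued]

omit [DecidableEq ι] in
theorem m_singleton (b : ι) : m {b} = Function.eval b := by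
  rw [m_eq_prod_eval, Finset.prod_singleton]

theorem one_add_F (U : Finset ι) : 1 + F U = ∏ i ∈ U, (1 + Function.eval i) := by
  funext a
  simp only [Pi.add_apply, Pi.one_apply, Finset.prod_apply, Function.eval]
  rw [Finset.prod_one_add, ← Finset.add_sum_erase _ _ (Finset.empty_mem_powerset U),
    Finset.prod_empty, F]

theorem one_add_F_union (U V : Finset ι) : 1 + F (U ∪ V) = (1 + F U) * (1 + F V) := by
  simp only [one_add_F, prod_union_of_zmod_two_valued]

theorem F_singleton (b : ι) : F {b} = Function.eval b := by
  simpa only [Finset.prod_singleton, add_right_inj] using one_add_F {b}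

theorem stmt17_general (S T U C : Finset ι) (b : ι)
    (hCU : C ⊆ U) :
    (m S * F U) * (m T * F (C ∪ {b}))
      = m (S ∪ T ∪ {b}) * F U + m (S ∪ T ∪ {b}) * F C + m (S ∪ T) * F C := by
  have hUC : (1 + F U) * (1 + F C) = 1 + F U := by
    rw [← one_add_F_union, Finset.union_eq_left.2 hCU]
  have hCb := one_add_F_union C {b}
  rw [F_singleton] at hCb
  have two_eq_zero : (2 : (ι → ZMod 2) → ZMod 2) = 0 := CharTwo.two_eq_zero
  simp only [m_union, m_singleton]
  linear_combination (m S * m T * F U) * hCb + (m S * m T * (1 + Function.eval b)) * hUC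
    - (m S * m T * F C * (1 + Function.eval b)) * two_eq_zero

theorem stmt17 (S T U C : Finset ι) (b : ι)
    (hCU : C ⊆ U) (hbU : b ∉ U) (hbST : b ∉ S ∪ T) :
    (m S * F U) * (m T * F (C ∪ {b}))
      = m (S ∪ T ∪ {b}) * F U + m (S ∪ T ∪ {b}) * F C + m (S ∪ T) * F C :=
  stmt17_general S T U C b hCU
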